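/- Let H^l_k and Θ̃^m_n denote, in cylindrical coordinates (x, ρ, θ), the vector fields H^l_k = (k-2l+1) x^{2l+1} ρ^{2(k-2l)} ∂/∂x - ((2l+1)/2) x^{2l} ρ^{2(k-2l)+1} ∂/∂ρ and Θ̃^m_n = x^{2m} ρ^{2(n-2m)} ∂/∂θ. Then the Lie brackets satisfy: [H^l_k, H^m_n] = ((2m+1)(k+2) - (2l+1)(n+2)) H^{l+m}_{k+n}, [H^l_k, Θ̃^m_n] = (2m(k+2) - n(2l+1)) Θ̃^{l+m}_{k+n}, and [Θ̃^l_k, Θ̃^m_n] = 0, for all integers with 0 ≤ 2l ≤ k and 0 ≤ 2m ≤ n. -/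

import Mathlib

/-- A vector field on `ℝ³` in cylindrical coordinates `(x, ρ, θ)`. -/
abbrev VF := ℝ → ℝ → ℝ → ℝ × ℝ × ℝ

noncomputable def pX (f : ℝ → ℝ → ℝ → ℝ) (x ρ θ : ℝ) : ℝ := deriv (fun t => f t ρ θ) x
noncomputable def pR (f : ℝ → ℝ → ℝ → ℝ) (x ρ θ : ℝ) : ℝ := deriv (fun t => f x t θ) ρ
noncomputable def pT (f : ℝ → ℝ → ℝ → ℝ) (x ρ θ : ℝ) : ℝ := deriv (fun t => f x ρ t) θ

def c1 (v : VF) : ℝ → ℝ → ℝ → ℝ := fun a b c => (v a b c).1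
def c2 (v : VF) : ℝ → ℝ → ℝ → ℝ := fun a b c => (v a b c).2.1
def c3 (v : VF) : ℝ → ℝ → ℝ → ℝ := fun a b c => (v a b c).2.2

/-- Directional derivative of a function along a vector field. -/
noncomputable def dirDeriv (v : VF) (f : ℝ → ℝ → ℝ → ℝ) (x ρ θ : ℝ) : ℝ :=
  c1 v x ρ θ * pX f x ρ θ + c2 v x ρ θ * pR f x ρ θ + c3 v x ρ θ * pT f x ρ θ

/-- The Jacobi–Lie bracket `[u,v] = uv - vu` of vector fields. -/
noncomputable def lieBracket (u v : VF) : VF := fun x ρ θ =>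
  (dirDeriv u (c1 v) x ρ θ - dirDeriv v (c1 u) x ρ θ,
   dirDeriv u (c2 v) x ρ θ - dirDeriv v (c2 u) x ρ θ,
   dirDeriv u (c3 v) x ρ θ - dirDeriv v (c3 u) x ρ θ)

/-- `H^l_k = (k-2l+1) x^{2l+1} ρ^{2(k-2l)} ∂/∂x - ((2l+1)/2) x^{2l} ρ^{2(k-2l)+1} ∂/∂ρ`. -/
noncomputable def H (l k : ℕ) : VF := fun x ρ _ =>
  (((k : ℝ) - 2 * (l : ℝ) + 1) * x ^ (2 * l + 1) * ρ ^ (2 * (k - 2 * l)),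
   -((2 * (l : ℝ) + 1) / 2) * x ^ (2 * l) * ρ ^ (2 * (k - 2 * l) + 1),
   0)

/-- `Θ̃^m_n = x^{2m} ρ^{2(n-2m)} ∂/∂θ`. -/
noncomputable def Th (m n : ℕ) : VF := fun x ρ _ =>
  (0, 0, x ^ (2 * m) * ρ ^ (2 * (n - 2 * m)))

/-! Every coefficient of `H` and `Θ̃` is a monomial `C x^a ρ^b`, and `H^l_k` is
`x^{2l} ρ^{2(k-2l)}` times a combination of the Euler operators `x ∂/∂x` and `ρ ∂/∂ρ`, which act
on `C x^a ρ^b` by the scalars `a` and `b`. So every bracket is a monomial whose coefficient is a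
difference of products of these eigenvalues; `Θ̃` kills all `θ`-independent functions. -/

def mono (C : ℝ) (a b : ℕ) : ℝ → ℝ → ℝ → ℝ := fun x ρ _ => C * x ^ a * ρ ^ b

lemma mul_deriv_const_mul_pow (c x : ℝ) (a : ℕ) :
    x * deriv (fun t => c * t ^ a) x = a * (c * x ^ a) := by
  rw [deriv_const_mul_field, deriv_pow_field]
  rcases a with _ | a
  · simp
  · rw [Nat.add_sub_cancel, pow_succ]; ring

lemma mul_pX_mono (C : ℝ) (a b : ℕ) (x ρ θ : ℝ) :
    x * pX (mono C a b) x ρ θ = a * mono C a b x ρ θ := by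
  have h : (fun t => mono C a b t ρ θ) = fun t => (C * ρ ^ b) * t ^ a := by
    funext t; simp only [mono]; ring
  rw [pX, h, mul_deriv_const_mul_pow]; simp only [mono]; ring

lemma mul_pR_mono (C : ℝ) (a b : ℕ) (x ρ θ : ℝ) :
    ρ * pR (mono C a b) x ρ θ = b * mono C a b x ρ θ :=
  mul_deriv_const_mul_pow (C * x ^ a) ρ b

lemma pT_mono (C : ℝ) (a b : ℕ) (x ρ θ : ℝ) : pT (mono C a b) x ρ θ = 0 :=
  deriv_const θ _

lemma dirDeriv_const (v : VF) (c x ρ θ : ℝ) : dirDeriv v (fun _ _ _ => c) x ρ θ = 0 := by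
  simp [dirDeriv, pX, pR, pT]

lemma c1_H (l k : ℕ) :
    c1 (H l k) = mono ((k : ℝ) - 2 * l + 1) (2 * l + 1) (2 * (k - 2 * l)) := rfl

lemma c2_H (l k : ℕ) :
    c2 (H l k) = mono (-((2 * (l : ℝ) + 1) / 2)) (2 * l) (2 * (k - 2 * l) + 1) := rfl

lemma c3_H (l k : ℕ) : c3 (H l k) = fun _ _ _ => 0 := rfl

lemma c1_Th (m n : ℕ) : c1 (Th m n) = fun _ _ _ => 0 := rfl

lemma c2_Th (m n : ℕ) : c2 (Th m n) = fun _ _ _ => 0 := rfl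

lemma c3_Th (m n : ℕ) : c3 (Th m n) = mono 1 (2 * m) (2 * (n - 2 * m)) := by
  funext x ρ θ; simp [Th, c3, mono]

lemma dirDeriv_H_mono (l k : ℕ) (C : ℝ) (a b : ℕ) (x ρ θ : ℝ) :
    dirDeriv (H l k) (mono C a b) x ρ θ =
      (((k : ℝ) - 2 * l + 1) * a - (2 * l + 1) / 2 * b) *
        mono C (2 * l + a) (2 * (k - 2 * l) + b) x ρ θ := by
  calc dirDeriv (H l k) (mono C a b) x ρ θ
      = x ^ (2 * l) * ρ ^ (2 * (k - 2 * l)) * (((k : ℝ) - 2 * l + 1) * (x * pX (mono C a b) x ρ θ)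
          - (2 * l + 1) / 2 * (ρ * pR (mono C a b) x ρ θ)) := by
        simp only [dirDeriv, c1_H, c2_H, c3_H, mono]; ring
    _ = _ := by
        rw [mul_pX_mono, mul_pR_mono]; simp only [mono]; ring

lemma dirDeriv_Th_mono (m n : ℕ) (C : ℝ) (a b : ℕ) (x ρ θ : ℝ) :
    dirDeriv (Th m n) (mono C a b) x ρ θ = 0 := by
  simp [dirDeriv, c1_Th, c2_Th, c3_Th, pT_mono]

lemma lieBracket_H_H {l k m n : ℕ} (hlk : 2 * l ≤ k) (hmn : 2 * m ≤ n) (x ρ θ : ℝ) :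
    lieBracket (H l k) (H m n) x ρ θ =
      ((2 * (m : ℝ) + 1) * ((k : ℝ) + 2) - (2 * (l : ℝ) + 1) * ((n : ℝ) + 2)) •
        H (l + m) (k + n) x ρ θ := by
  simp only [lieBracket, c1_H, c2_H, c3_H, dirDeriv_H_mono, dirDeriv_const]
  simp only [H, mono, Prod.smul_mk, smul_eq_mul, Prod.mk.injEq]
  refine ⟨?_, ?_, by ring⟩
  · rw [show 2 * l + (2 * m + 1) = 2 * (l + m) + 1 by ring,
      show 2 * m + (2 * l + 1) = 2 * (l + m) + 1 by ring,
      show 2 * (k - 2 * l) + 2 * (n - 2 * m) = 2 * (k + n - 2 * (l + m)) by omega,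
      show 2 * (n - 2 * m) + 2 * (k - 2 * l) = 2 * (k + n - 2 * (l + m)) by omega]
    push_cast [Nat.cast_sub hlk, Nat.cast_sub hmn]
    ring
  · rw [show 2 * l + 2 * m = 2 * (l + m) by ring, show 2 * m + 2 * l = 2 * (l + m) by ring,
      show 2 * (k - 2 * l) + (2 * (n - 2 * m) + 1) = 2 * (k + n - 2 * (l + m)) + 1 by omega,
      show 2 * (n - 2 * m) + (2 * (k - 2 * l) + 1) = 2 * (k + n - 2 * (l + m)) + 1 by omega]
    push_cast [Nat.cast_sub hlk, Nat.cast_sub hmn]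
    ring

lemma lieBracket_H_Th {l k m n : ℕ} (hlk : 2 * l ≤ k) (hmn : 2 * m ≤ n) (x ρ θ : ℝ) :
    lieBracket (H l k) (Th m n) x ρ θ =
      (2 * (m : ℝ) * ((k : ℝ) + 2) - (n : ℝ) * (2 * (l : ℝ) + 1)) •
        Th (l + m) (k + n) x ρ θ := by
  simp only [lieBracket, c1_H, c2_H, c3_H, c1_Th, c2_Th, c3_Th, dirDeriv_H_mono,
    dirDeriv_Th_mono, dirDeriv_const]
  simp only [Th, mono, Prod.smul_mk, smul_eq_mul, Prod.mk.injEq]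
  refine ⟨by ring, by ring, ?_⟩
  rw [show 2 * l + 2 * m = 2 * (l + m) by ring,
    show 2 * (k - 2 * l) + 2 * (n - 2 * m) = 2 * (k + n - 2 * (l + m)) by omega]
  push_cast [Nat.cast_sub hlk, Nat.cast_sub hmn]
  ring

lemma lieBracket_Th_Th (l k m n : ℕ) (x ρ θ : ℝ) : lieBracket (Th l k) (Th m n) x ρ θ = 0 := by
  simp only [lieBracket, c1_Th, c2_Th, c3_Th, dirDeriv_Th_mono, dirDeriv_const,
    sub_self, Prod.mk_zero_zero]

/-- Structure constants of the Lie algebra spanned by the `H`- and `Θ̃`-terms: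
`[H^l_k, H^m_n] = ((2m+1)(k+2) - (2l+1)(n+2)) H^{l+m}_{k+n}`,
`[H^l_k, Θ̃^m_n] = (2m(k+2) - n(2l+1)) Θ̃^{l+m}_{k+n}`, and `[Θ̃^l_k, Θ̃^m_n] = 0`. -/
theorem structure_constants (l k m n : ℕ) (hlk : 2 * l ≤ k) (hmn : 2 * m ≤ n) :
    (∀ x ρ θ : ℝ,
      lieBracket (H l k) (H m n) x ρ θ =
        ((2 * (m : ℝ) + 1) * ((k : ℝ) + 2) - (2 * (l : ℝ) + 1) * ((n : ℝ) + 2)) •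
          H (l + m) (k + n) x ρ θ) ∧
    (∀ x ρ θ : ℝ,
      lieBracket (H l k) (Th m n) x ρ θ =
        (2 * (m : ℝ) * ((k : ℝ) + 2) - (n : ℝ) * (2 * (l : ℝ) + 1)) •
          Th (l + m) (k + n) x ρ θ) ∧
    (∀ x ρ θ : ℝ, lieBracket (Th l k) (Th m n) x ρ θ = 0) :=
  ⟨lieBracket_H_H hlk hmn, lieBracket_H_Th hlk hmn, lieBracket_Th_Th l k m n⟩
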